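/- Let K = {(t,x) ∈ ℝ × ℝ^{n-1} : t ∈ [−1,1], |x| ≤ r₁(t)} be a symmetric convex body of revolution with r₁ concave, r₁(0) = 1, and let K° = {(s,y) : s ∈ [−1,1], |y| ≤ r₂(s)} be its polar body with r₂ concave, r₂(0) = 1. Then the second summand in the decomposition of φ(K) is bounded by φ(B_2^{n-1}): [∫_{−1}^{1} r₁(t)^{n+1} dt · ∫_{−1}^{1} r₂(s)^{n+1} ds] / [∫_{−1}^{1} r₁(t)^{n-1} dt · ∫_{−1}^{1} r₂(s)^{n-1} ds] · φ(B_2^{n-1}) ≤ (n−1)/(n+1)². -/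

import Mathlib

open MeasureTheory Real Set
open scoped RealInnerProductSpace

/-- The polar body `K° = {x : ⟨x,y⟩ ≤ 1 for all y ∈ K}`. -/
noncomputable def polarBody {n : ℕ} (K : Set (EuclideanSpace ℝ (Fin n))) :
    Set (EuclideanSpace ℝ (Fin n)) :=
  {x | ∀ y ∈ K, ⟪x, y⟫ ≤ 1}

/-- The Euclidean norm of the vector of all coordinates except the first one,
i.e. `|x|` for `x̄ = (t, x) ∈ ℝ × ℝ^{n-1}`. -/
noncomputable def tailNorm {n : ℕ} [NeZero n] (x : EuclideanSpace ℝ (Fin n)) : ℝ :=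
  Real.sqrt (∑ i ∈ Finset.univ.erase (0 : Fin n), x i ^ 2)

/-- The body of revolution `{(t,x) ∈ ℝ × ℝ^{n-1} : t ∈ [−1,1], |x| ≤ r t}`. -/
def revBody (n : ℕ) [NeZero n] (r : ℝ → ℝ) : Set (EuclideanSpace ℝ (Fin n)) :=
  {x | x 0 ∈ Icc (-1 : ℝ) 1 ∧ tailNorm x ≤ r (x 0)}


/-! Both `K` and `K°` lie in the slab `|x₀| ≤ 1` and contain `eⱼ = (0, 1)`, since
`r₁ 0 = r₂ 0 = 1`. Pairing `eⱼ` with the boundary points `(t, r(t) eⱼ)` gives `r₁, r₂ ≤ 1`;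
the slab gives `r₂ ≥ 0`, and concavity gives `r₁ ≥ 0` on `(-1, 1)`. Hence `r^(n+1) ≤ r^(n-1)`
pointwise, so `∫ r^(n+1) ≤ ∫ r^(n-1)` for both radii and the ratio of products is at most `1`. -/

lemma subset_polarBody_polarBody {n : ℕ} (K : Set (EuclideanSpace ℝ (Fin n))) :
    K ⊆ polarBody (polarBody K) := fun x hx _ hy => real_inner_comm x _ ▸ hy x hx

section RevolutionBody

variable {n : ℕ} [NeZero n]

lemma tailNorm_single_zero_add_single {j : Fin n} (hj : j ≠ 0) (t c : ℝ) :
    tailNorm (EuclideanSpace.single (0 : Fin n) t + EuclideanSpace.single j c) = |c| := by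
  unfold tailNorm
  rw [Finset.sum_eq_single_of_mem j (Finset.mem_erase.2 ⟨hj, Finset.mem_univ j⟩)]
  · simp [hj, Real.sqrt_sq_eq_abs]
  · intro i hi hij
    simp [(Finset.mem_erase.1 hi).1, hij]

lemma single_zero_add_single_mem_revBody_iff {j : Fin n} (hj : j ≠ 0) {r : ℝ → ℝ} {t c : ℝ} :
    EuclideanSpace.single (0 : Fin n) t + EuclideanSpace.single j c ∈ revBody n r ↔
      t ∈ Icc (-1 : ℝ) 1 ∧ |c| ≤ r t := by
  simp [revBody, tailNorm_single_zero_add_single hj, Ne.symm hj]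

lemma single_mem_revBody {j : Fin n} (hj : j ≠ 0) {r : ℝ → ℝ} (hr : 1 ≤ r 0) :
    EuclideanSpace.single j 1 ∈ revBody n r := by
  have h := (single_zero_add_single_mem_revBody_iff hj (r := r) (t := 0) (c := 1)).2
    ⟨by norm_num, by simpa using hr⟩
  rwa [show EuclideanSpace.single (0 : Fin n) (0 : ℝ) = 0 by simp, zero_add] at h

lemma nonneg_of_mem_revBody {r : ℝ → ℝ} {x : EuclideanSpace ℝ (Fin n)} (hx : x ∈ revBody n r) :
    0 ≤ r (x 0) :=
  (Real.sqrt_nonneg _).trans hx.2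

lemma single_zero_mem_polarBody_revBody (r : ℝ → ℝ) {s : ℝ} (hs : s ∈ Icc (-1 : ℝ) 1) :
    EuclideanSpace.single (0 : Fin n) s ∈ polarBody (revBody n r) := by
  intro y hy
  rw [EuclideanSpace.inner_single_left, conj_trivial]
  calc s * y 0 ≤ |s| * |y 0| := (le_abs_self _).trans (abs_mul _ _).le
    _ ≤ 1 := mul_le_one₀ (abs_le.2 hs) (abs_nonneg _) (abs_le.2 hy.1)

lemma le_one_of_single_mem_polarBody {j : Fin n} (hj : j ≠ 0) {r : ℝ → ℝ}
    (h : EuclideanSpace.single j 1 ∈ polarBody (revBody n r)) {t : ℝ}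
    (ht : t ∈ Icc (-1 : ℝ) 1) : r t ≤ 1 := by
  rcases lt_or_ge (r t) 0 with hneg | hnonneg
  · linarith
  · have hmem := (single_zero_add_single_mem_revBody_iff hj).2 ⟨ht, (abs_of_nonneg hnonneg).le⟩
    simpa [EuclideanSpace.inner_single_left, Ne.symm hj] using h _ hmem

/-- If `r t < 0`, concavity through `r 0 ≥ 0` confines `K` to the side of `t` containing `0`,
so `K°` contains `t⁻¹ e₀`, which is impossible for `|t| < 1`. -/
lemma nonneg_of_concaveOn {r : ℝ → ℝ} (hr : ConcaveOn ℝ (Icc (-1 : ℝ) 1) r) (hr0 : 0 ≤ r 0)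
    (hpolar : ∀ x ∈ polarBody (revBody n r), x 0 ∈ Icc (-1 : ℝ) 1) {t : ℝ}
    (ht : t ∈ Ioo (-1 : ℝ) 1) : 0 ≤ r t := by
  by_contra! hneg
  have ht0 : t ≠ 0 := by rintro rfl; linarith
  have hmem : EuclideanSpace.single (0 : Fin n) t⁻¹ ∈ polarBody (revBody n r) := by
    intro y hy
    rw [EuclideanSpace.inner_single_left, conj_trivial]
    by_contra! hlt
    set a := t⁻¹ * y 0
    have hy0 : y 0 ≠ 0 := by rintro h; simp [a, h] at hlt; linarith
    have hat : a⁻¹ * y 0 = t := by rw [mul_inv, inv_inv, inv_mul_cancel_right₀ hy0]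
    have ha : 0 ≤ a⁻¹ := inv_nonneg.2 (by linarith)
    have ha1 : 0 ≤ 1 - a⁻¹ := sub_nonneg.2 (inv_le_one_of_one_le₀ hlt.le)
    have hconc := hr.2 (by norm_num : (0 : ℝ) ∈ Icc (-1 : ℝ) 1) hy.1 ha1 ha (by ring)
    simp only [smul_eq_mul, mul_zero, zero_add, hat] at hconc
    nlinarith [mul_nonneg ha1 hr0, mul_nonneg ha (nonneg_of_mem_revBody hy)]
  have hinv : |t|⁻¹ ≤ 1 := by
    rw [← abs_inv]
    exact abs_le.2 (by simpa using hpolar _ hmem)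
  rw [inv_le_one₀ (abs_pos.2 ht0)] at hinv
  exact hinv.not_gt (abs_lt.2 ht)

end RevolutionBody

lemma integrableOn_pow_of_mem_Icc {α : Type*} [MeasurableSpace α] {μ : Measure α} {s : Set α}
    {f : α → ℝ} (hs : MeasurableSet s) (hμs : μ s ≠ ⊤) (hf : AEStronglyMeasurable f (μ.restrict s))
    (hf01 : ∀ x ∈ s, f x ∈ Icc (0 : ℝ) 1) (k : ℕ) :
    IntegrableOn (fun x => f x ^ k) s μ := by
  refine Integrable.mono' (g := fun _ => (1 : ℝ)) (integrableOn_const hμs) (hf.pow k) ?_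
  filter_upwards [ae_restrict_mem hs] with x hx
  rw [Real.norm_eq_abs, abs_pow]
  exact pow_le_one₀ (abs_nonneg _) (abs_le.2 ⟨by linarith [(hf01 x hx).1], (hf01 x hx).2⟩)

lemma setIntegral_pow_le_pow_of_mem_Icc {α : Type*} [MeasurableSpace α] {μ : Measure α}
    {s : Set α} {f : α → ℝ} (hs : MeasurableSet s) (hμs : μ s ≠ ⊤)
    (hf : AEStronglyMeasurable f (μ.restrict s)) (hf01 : ∀ x ∈ s, f x ∈ Icc (0 : ℝ) 1)
    {k m : ℕ} (hkm : k ≤ m) :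
    ∫ x in s, f x ^ m ∂μ ≤ ∫ x in s, f x ^ k ∂μ :=
  setIntegral_mono_on (integrableOn_pow_of_mem_Icc hs hμs hf hf01 m)
    (integrableOn_pow_of_mem_Icc hs hμs hf hf01 k) hs
    fun x hx => pow_le_pow_of_le_one (hf01 x hx).1 (hf01 x hx).2 hkm

section Radius

variable {r : ℝ → ℝ}

lemma setIntegral_Icc_pow_nonneg (h0 : ∀ t ∈ Ioo (-1 : ℝ) 1, 0 ≤ r t) (m : ℕ) :
    0 ≤ ∫ t in Icc (-1 : ℝ) 1, r t ^ m := by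
  rw [integral_Icc_eq_integral_Ioo]
  exact setIntegral_nonneg measurableSet_Ioo fun t ht => pow_nonneg (h0 t ht) m

lemma setIntegral_Icc_pow_le_pow (hr : ConcaveOn ℝ (Icc (-1 : ℝ) 1) r)
    (h01 : ∀ t ∈ Ioo (-1 : ℝ) 1, r t ∈ Icc (0 : ℝ) 1) {k m : ℕ} (hkm : k ≤ m) :
    ∫ t in Icc (-1 : ℝ) 1, r t ^ m ≤ ∫ t in Icc (-1 : ℝ) 1, r t ^ k := by
  have hc : ContinuousOn r (Ioo (-1 : ℝ) 1) :=
    (hr.subset Ioo_subset_Icc_self (convex_Ioo _ _)).continuousOn isOpen_Ioo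
  rw [integral_Icc_eq_integral_Ioo, integral_Icc_eq_integral_Ioo]
  exact setIntegral_pow_le_pow_of_mem_Icc measurableSet_Ioo measure_Ioo_lt_top.ne
    (hc.aestronglyMeasurable measurableSet_Ioo) h01 hkm

end Radius

theorem revolution_second_summand_le_general (n : ℕ) [NeZero n] (hn : 2 ≤ n) (r₁ r₂ : ℝ → ℝ)
    (hr₁ : ConcaveOn ℝ (Icc (-1 : ℝ) 1) r₁) (hr₁0 : r₁ 0 = 1)
    (hr₂ : ConcaveOn ℝ (Icc (-1 : ℝ) 1) r₂) (hr₂0 : r₂ 0 = 1)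
    (hpolar : polarBody (revBody n r₁) = revBody n r₂) :
    ((∫ t in Icc (-1 : ℝ) 1, r₁ t ^ (n + 1)) * (∫ s in Icc (-1 : ℝ) 1, r₂ s ^ (n + 1)) /
        ((∫ t in Icc (-1 : ℝ) 1, r₁ t ^ (n - 1)) *
          (∫ s in Icc (-1 : ℝ) 1, r₂ s ^ (n - 1)))) *
        (((n : ℝ) - 1) / ((n : ℝ) + 1) ^ 2) ≤
      ((n : ℝ) - 1) / ((n : ℝ) + 1) ^ 2 := by
  obtain ⟨j, hj⟩ : ∃ j : Fin n, j ≠ 0 := ⟨⟨1, hn⟩, by simp [Fin.ext_iff]⟩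
  have hr₁01 : ∀ t ∈ Ioo (-1 : ℝ) 1, r₁ t ∈ Icc (0 : ℝ) 1 := fun t ht =>
    ⟨nonneg_of_concaveOn hr₁ (by simp [hr₁0]) (fun x hx => (hpolar ▸ hx : x ∈ revBody n r₂).1) ht,
      le_one_of_single_mem_polarBody hj (hpolar ▸ single_mem_revBody hj hr₂0.ge)
        (Ioo_subset_Icc_self ht)⟩
  have hr₂01 : ∀ s ∈ Ioo (-1 : ℝ) 1, r₂ s ∈ Icc (0 : ℝ) 1 := fun s hs =>
    have hmem : EuclideanSpace.single (0 : Fin n) s ∈ revBody n r₂ :=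
      hpolar ▸ single_zero_mem_polarBody_revBody r₁ (Ioo_subset_Icc_self hs)
    ⟨by simpa using nonneg_of_mem_revBody hmem,
      le_one_of_single_mem_polarBody hj
        (hpolar ▸ subset_polarBody_polarBody _ (single_mem_revBody hj hr₁0.ge))
        (Ioo_subset_Icc_self hs)⟩
  have hφ : 0 ≤ ((n : ℝ) - 1) / ((n : ℝ) + 1) ^ 2 :=
    div_nonneg (sub_nonneg.2 (by exact_mod_cast (by omega : 1 ≤ n))) (by positivity)
  have hkm : n - 1 ≤ n + 1 := by omega
  refine mul_le_of_le_one_left hφ (div_le_one_of_le₀ (mul_le_mul ?_ ?_ ?_ ?_) (mul_nonneg ?_ ?_))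
  · exact setIntegral_Icc_pow_le_pow hr₁ hr₁01 hkm
  · exact setIntegral_Icc_pow_le_pow hr₂ hr₂01 hkm
  · exact setIntegral_Icc_pow_nonneg (fun s hs => (hr₂01 s hs).1) _
  · exact (setIntegral_Icc_pow_nonneg (fun t ht => (hr₁01 t ht).1) _).trans
      (setIntegral_Icc_pow_le_pow hr₁ hr₁01 hkm)
  · exact setIntegral_Icc_pow_nonneg (fun t ht => (hr₁01 t ht).1) _
  · exact setIntegral_Icc_pow_nonneg (fun s hs => (hr₂01 s hs).1) _

/-- Let `K = {(t,x) : t ∈ [−1,1], |x| ≤ r₁(t)}` be a symmetric convex body of revolution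
with `r₁` concave, `r₁(0) = 1`, and let `K° = {(s,y) : s ∈ [−1,1], |y| ≤ r₂(s)}` be its
polar body with `r₂` concave, `r₂(0) = 1`.  Then
`[∫ r₁^{n+1} · ∫ r₂^{n+1}] / [∫ r₁^{n-1} · ∫ r₂^{n-1}] · φ(B_2^{n-1}) ≤ (n−1)/(n+1)²`,
where `φ(B_2^{n-1}) = (n−1)/(n+1)²`. -/
theorem revolution_second_summand_le (n : ℕ) [NeZero n] (hn : 2 ≤ n) (r₁ r₂ : ℝ → ℝ)
    (hr₁ : ConcaveOn ℝ (Icc (-1 : ℝ) 1) r₁) (hr₁0 : r₁ 0 = 1)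
    (hr₂ : ConcaveOn ℝ (Icc (-1 : ℝ) 1) r₂) (hr₂0 : r₂ 0 = 1)
    (hKcompact : IsCompact (revBody n r₁)) (hKconv : Convex ℝ (revBody n r₁))
    (hKint : (interior (revBody n r₁)).Nonempty)
    (hKsymm : ∀ x ∈ revBody n r₁, -x ∈ revBody n r₁)
    (hpolar : polarBody (revBody n r₁) = revBody n r₂) :
    ((∫ t in Icc (-1 : ℝ) 1, r₁ t ^ (n + 1)) * (∫ s in Icc (-1 : ℝ) 1, r₂ s ^ (n + 1)) /
        ((∫ t in Icc (-1 : ℝ) 1, r₁ t ^ (n - 1)) *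
          (∫ s in Icc (-1 : ℝ) 1, r₂ s ^ (n - 1)))) *
        (((n : ℝ) - 1) / ((n : ℝ) + 1) ^ 2) ≤
      ((n : ℝ) - 1) / ((n : ℝ) + 1) ^ 2 :=
  revolution_second_summand_le_general n hn r₁ r₂ hr₁ hr₁0 hr₂ hr₂0 hpolar
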